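/- arXiv:0804.0726 — 5 statements merged into one kernel-verified Lean document; each statement's English description precedes it below -/
import Mathlib

section
/- Let (X_i) be i.i.d. nonnegative integer-valued random variables and set p_n = P(X_1 + ... + X_n ≤ n). If p_{n} ~ P(X_1 + ... + X_n ≤ n − k) for every fixed k ≥ 0, then p_{n+1} ~ p_n as n → ∞, i.e. P(X_1 + ... + X_{n+1} ≤ n+1) / P(X_1 + ... + X_n ≤ n) → 1. -/
/-!
Write `p n m = P(S n ≤ m)`. The ratio `p (n+1) (n+1) / p n n` is the quotient of
`p (n+1) n / p n n` by `p (n+1) n / p (n+1) (n+1)`, and the latter tends to `1` by the hypothesis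
with `k = 1` taken at `n + 1`. The former is at most `1` because `S (n+1) ≥ S n`, and
conditioning on `X n` gives `p (n+1) n ≥ ∑ k < K, μ {k} * p n (n - k)`; by the hypothesis its
lower limit is therefore at least `μ {0, …, K - 1}` for every `K`, hence at least `1`.
-/

open MeasureTheory ProbabilityTheory Filter Finset Topology

lemma tendsto_nhds_one_of_sum_mul_le {w : ℕ → ℝ} (hw : HasSum w 1) {g : ℕ → ℕ → ℝ}
    (hg : ∀ k, Tendsto (g k) atTop (𝓝 1)) {c : ℕ → ℝ}
    (hlow : ∀ K n, ∑ k ∈ range K, w k * g k n ≤ c n) (hup : ∀ n, c n ≤ 1) :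
    Tendsto c atTop (𝓝 1) := by
  refine tendsto_order.2 ⟨fun a ha => ?_, fun a ha => .of_forall fun n => (hup n).trans_lt ha⟩
  obtain ⟨K, hK⟩ := (hw.tendsto_sum_nat.eventually (lt_mem_nhds ha)).exists
  have hlim : Tendsto (fun n => ∑ k ∈ range K, w k * g k n) atTop (𝓝 (∑ k ∈ range K, w k)) := by
    simpa using tendsto_finsetSum _ fun k _ => (hg k).const_mul (w k)
  filter_upwards [hlim.eventually (lt_mem_nhds hK)] with n hn using hn.trans_le (hlow K n)

lemma hasSum_measure_singleton_toReal (μ : Measure ℕ) [IsProbabilityMeasure μ] :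
    HasSum (fun k => (μ {k}).toReal) 1 := by
  have htsum : ∑' k, μ {k} = 1 := μ.toPMF.tsum_coe
  have := ENNReal.hasSum_toReal (htsum ▸ ENNReal.one_ne_top)
  rwa [← ENNReal.tsum_toReal_eq fun _ => measure_ne_top μ _, htsum, ENNReal.toReal_one] at this

section

variable {Ω : Type*} [MeasurableSpace Ω]

lemma sum_measure_mul_le_measure_add_le {P : Measure Ω} {Y Z : Ω → ℕ} (hY : Measurable Y)
    (hZ : Measurable Z) (hYZ : IndepFun Y Z P) (s : Finset ℕ) (m : ℤ) :
    ∑ k ∈ s, P (Z ⁻¹' {k}) * P {ω | (Y ω : ℤ) ≤ m - k} ≤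
      P {ω | ((Y ω + Z ω : ℕ) : ℤ) ≤ m} := by
  set A : ℕ → Set Ω := fun k => {ω | (Y ω : ℤ) ≤ m - k} ∩ Z ⁻¹' {k}
  have hdisj : (s : Set ℕ).PairwiseDisjoint A := fun j _ k _ hjk =>
    Set.disjoint_left.2 fun ω hj hk => hjk (hj.2.symm.trans hk.2)
  have hsub : (⋃ k ∈ s, A k) ⊆ {ω | ((Y ω + Z ω : ℕ) : ℤ) ≤ m} := by
    simp only [Set.iUnion_subset_iff]
    rintro k - ω ⟨hY, rfl⟩
    simp only [Set.mem_ofPred_eq] at hY ⊢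
    push_cast
    linarith
  calc ∑ k ∈ s, P (Z ⁻¹' {k}) * P {ω | (Y ω : ℤ) ≤ m - k}
      = ∑ k ∈ s, P (A k) := sum_congr rfl fun k _ => by
        rw [mul_comm]
        exact (hYZ.measure_inter_preimage_eq_mul {y : ℕ | (y : ℤ) ≤ m - k} {k} trivial
          trivial).symm
    _ = P (⋃ k ∈ s, A k) :=
        (measure_biUnion_finset hdisj fun k _ =>
          (hY (t := {y : ℕ | (y : ℤ) ≤ m - k}) trivial).inter (hZ trivial)).symm
    _ ≤ _ := measure_mono hsub

noncomputable def sumCDF (P : Measure Ω) (X : ℕ → Ω → ℕ) (n : ℕ) (m : ℤ) : ℝ :=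
  (P {ω | ((∑ i ∈ range n, X i ω : ℕ) : ℤ) ≤ m}).toReal

variable {P : Measure Ω} {X : ℕ → Ω → ℕ}

lemma sumCDF_natCast (n m : ℕ) :
    sumCDF P X n m = (P {ω | ∑ i ∈ range n, X i ω ≤ m}).toReal := by
  simp only [sumCDF, Nat.cast_le]

lemma sumCDF_nonneg (n : ℕ) (m : ℤ) : 0 ≤ sumCDF P X n m := ENNReal.toReal_nonneg

lemma sumCDF_succ_le [IsFiniteMeasure P] (n : ℕ) (m : ℤ) :
    sumCDF P X (n + 1) m ≤ sumCDF P X n m := by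
  refine ENNReal.toReal_mono (measure_ne_top P _) (measure_mono fun ω hω => ?_)
  simp only [Set.mem_ofPred_eq, sum_range_succ, Nat.cast_add] at hω ⊢
  linarith [(X n ω).cast_nonneg (α := ℤ)]

lemma sum_mul_sumCDF_le_sumCDF_succ [IsFiniteMeasure P] (hmeas : ∀ i, Measurable (X i))
    (hindep : iIndepFun X P) {μ : Measure ℕ} {n : ℕ} (hlaw : P.map (X n) = μ) (s : Finset ℕ)
    (m : ℤ) : ∑ k ∈ s, (μ {k}).toReal * sumCDF P X n (m - k) ≤ sumCDF P X (n + 1) m := by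
  subst hlaw
  have hS : Measurable (∑ i ∈ range n, X i) := by
    rw [Finset.sum_fn]
    exact Finset.measurable_sum _ fun i _ => hmeas i
  have h := sum_measure_mul_le_measure_add_le hS (hmeas n)
    (hindep.indepFun_finsetSum_of_notMem hmeas notMem_range_self) s m
  simp only [Finset.sum_apply, ← sum_range_succ] at h
  have hreal := ENNReal.toReal_mono (measure_ne_top P _) h
  rw [ENNReal.toReal_sum fun k _ => ENNReal.mul_ne_top (measure_ne_top _ _)
    (measure_ne_top _ _)] at hreal
  simp only [ENNReal.toReal_mul] at hreal
  simp only [Measure.map_apply (hmeas n) (measurableSet_singleton _)]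
  exact hreal

end

/-- Let `(X i)` be i.i.d. nonnegative integer-valued random variables and
`p n = P(S n ≤ n)`.  If `p n ~ P(S n ≤ n - k)` for every fixed `k ≥ 0`, then
`p (n+1) ~ p n` as `n → ∞`. -/
theorem succ_cumulative_equiv
    {Ω : Type*} [MeasurableSpace Ω] (P : Measure Ω) [IsProbabilityMeasure P]
    (μ : Measure ℕ) [IsProbabilityMeasure μ]
    (X : ℕ → Ω → ℕ) (hmeas : ∀ i, Measurable (X i))
    (hindep : iIndepFun X P)
    (hlaw : ∀ i, P.map (X i) = μ)
    (hequiv : ∀ k : ℕ, Tendsto (fun n : ℕ =>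
        (P {ω | ((∑ i ∈ Finset.range n, X i ω : ℕ) : ℤ) ≤ (n : ℤ) - (k : ℤ)}).toReal /
        (P {ω | ((∑ i ∈ Finset.range n, X i ω : ℕ) : ℤ) ≤ (n : ℤ)}).toReal)
      atTop (nhds 1)) :
    Tendsto (fun n : ℕ =>
        (P {ω | (∑ i ∈ Finset.range (n + 1), X i ω : ℕ) ≤ n + 1}).toReal /
        (P {ω | (∑ i ∈ Finset.range n, X i ω : ℕ) ≤ n}).toReal)
      atTop (nhds 1) := by
  have hstep : Tendsto (fun n : ℕ => sumCDF P X (n + 1) n / sumCDF P X n n) atTop (𝓝 1) := by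
    refine tendsto_nhds_one_of_sum_mul_le (hasSum_measure_singleton_toReal μ)
      (g := fun k n => sumCDF P X n (n - k) / sumCDF P X n n) hequiv (fun K n => ?_)
      fun n => div_le_one_of_le₀ (sumCDF_succ_le n n) (sumCDF_nonneg n n)
    simpa only [mul_div_assoc, Finset.sum_div] using div_le_div_of_nonneg_right
      (sum_mul_sumCDF_le_sumCDF_succ hmeas hindep (hlaw n) (range K) n) (sumCDF_nonneg n n)
  have hshift : Tendsto (fun n : ℕ => sumCDF P X (n + 1) n / sumCDF P X (n + 1) (n + 1 : ℕ))
      atTop (𝓝 1) := by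
    refine ((hequiv 1).comp (tendsto_add_atTop_nat 1)).congr fun n => ?_
    have hcast : ((n + 1 : ℕ) : ℤ) - (1 : ℕ) = n := by omega
    simp only [Function.comp_apply, hcast]
    rfl
  have hne : ∀ᶠ n in atTop, sumCDF P X (n + 1) n ≠ 0 := by
    filter_upwards [hshift.eventually_ne one_ne_zero] with n hn using (div_ne_zero_iff.1 hn).1
  have hlim := hstep.div hshift one_ne_zero
  rw [div_one] at hlim
  refine hlim.congr' ?_
  filter_upwards [hne] with n hn
  rw [Pi.div_apply, div_div_div_cancel_left' _ _ hn, ← sumCDF_natCast, ← sumCDF_natCast]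
end

section
/- Kemperman's formula: let (X_i) be i.i.d. nonnegative integer-valued random variables, S_n = X_1 + ... + X_n, and T_k = inf{n ≥ 0 : S_n = n − k} the first passage time of the walk S_n − n to level −k. Then for every 1 ≤ k < n, P(T_k = n) = (k/n) P(S_n = n − k). -/
/-!
Cycle lemma plus exchangeability. Extend `x₀, …, x_{n-1}` periodically and let `w j = S_j - j`;
on the event `S_n = n - k` this walk satisfies `w (j + n) = w j - k`. The rotation starting at `r`
first reaches `-k` at time `n` iff `r + n` is a time at which `w` strictly undercuts all its past
values. Since `w` is downward skip-free, its running minimum drops by exactly one at each such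
time, so between times `n` and `2n` there are exactly `k` of them. Exchangeability of the i.i.d.
vector makes all `n` rotations equally likely, whence `n P(T_k = n) = k P(S_n = n - k)`.
-/

open MeasureTheory ProbabilityTheory Finset
open scoped ENNReal

namespace Kemperman

def SkipFree (w : ℕ → ℤ) : Prop := ∀ i, w i - 1 ≤ w (i + 1)

def IsFirstPassageTime (w : ℕ → ℤ) (t : ℤ) (n : ℕ) : Prop := w n = t ∧ ∀ m < n, w m ≠ t

instance {w : ℕ → ℤ} {t : ℤ} {n : ℕ} : Decidable (IsFirstPassageTime w t n) :=
  inferInstanceAs (Decidable (_ ∧ _))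

def runningMin (w : ℕ → ℤ) (T : ℕ) : ℤ := (range (T + 1)).inf' nonempty_range_add_one w

section RunningMin

variable {w : ℕ → ℤ} {n k : ℕ}

theorem runningMin_le {j T : ℕ} (h : j ≤ T) : runningMin w T ≤ w j :=
  inf'_le w (mem_range_succ_iff.2 h)

theorem lt_runningMin_iff {a : ℤ} {T : ℕ} : a < runningMin w T ↔ ∀ j ≤ T, a < w j := by
  simp [runningMin, lt_inf'_iff]

theorem le_runningMin_iff {a : ℤ} {T : ℕ} : a ≤ runningMin w T ↔ ∀ j ≤ T, a ≤ w j := by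
  simp [runningMin, le_inf'_iff]

theorem exists_eq_runningMin (T : ℕ) : ∃ j ≤ T, w j = runningMin w T := by
  obtain ⟨j, hj, h⟩ := exists_mem_eq_inf' nonempty_range_add_one w
  exact ⟨j, mem_range_succ_iff.1 hj, h.symm⟩

theorem runningMin_succ (T : ℕ) : runningMin w (T + 1) = min (runningMin w T) (w (T + 1)) := by
  simp only [runningMin, range_add_one (n := T + 1), inf'_insert nonempty_range_add_one]
  exact inf_comm _ _

theorem runningMin_add_period (hper : ∀ j, w (j + n) = w j - k) {T : ℕ} (hT : n ≤ T + 1) :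
    runningMin w (T + n) = runningMin w T - k := by
  apply le_antisymm
  · obtain ⟨j, hj, hjT⟩ := exists_eq_runningMin (w := w) T
    calc runningMin w (T + n) ≤ w (j + n) := runningMin_le (by omega)
      _ = runningMin w T - k := by rw [hper, hjT]
  · refine le_runningMin_iff.2 fun j hj => ?_
    rcases lt_or_ge j n with hjn | hjn
    · have := runningMin_le (w := w) (show j ≤ T by omega)
      omega
    · have := runningMin_le (w := w) (show j - n ≤ T by omega)
      have := hper (j - n)
      rw [Nat.sub_add_cancel hjn] at this
      omega

end RunningMin

namespace SkipFree

variable {w : ℕ → ℤ} {n k : ℕ}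

theorem runningMin_sub_runningMin_succ (hw : SkipFree w) (T : ℕ) :
    runningMin w T - runningMin w (T + 1) = if w (T + 1) < runningMin w T then 1 else 0 := by
  have := runningMin_le (w := w) (le_refl T)
  have := hw T
  rw [runningMin_succ]
  split_ifs <;> omega

theorem exists_mem_Icc_eq (hw : SkipFree w) {s u : ℕ} (hsu : s ≤ u) {t : ℤ}
    (hs : t ≤ w s) (hu : w u ≤ t) : ∃ j ∈ Set.Icc s u, w j = t := by
  induction u, hsu using Nat.le_induction with
  | base => exact ⟨s, ⟨le_rfl, le_rfl⟩, le_antisymm hu hs⟩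
  | succ u hsu ih =>
    by_cases h : w u ≤ t
    · obtain ⟨j, ⟨hsj, hju⟩, hj⟩ := ih h
      exact ⟨j, ⟨hsj, by omega⟩, hj⟩
    · have := hw u
      exact ⟨u + 1, ⟨by omega, le_rfl⟩, by omega⟩

theorem isFirstPassageTime_shift_iff (hw : SkipFree w) (hper : ∀ j, w (j + n) = w j - k)
    {r : ℕ} (hr : r < n) :
    IsFirstPassageTime (fun m => w (r + m) - w r) (-k) n ↔ ∀ j < r + n, w (r + n) < w j := by
  have hrn : w (r + n) = w r - k := hper r
  simp only [IsFirstPassageTime]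
  constructor
  · rintro ⟨-, hfirst⟩
    have hwindow : ∀ j, r ≤ j → j < r + n → w (r + n) < w j := by
      intro j hrj hjn
      by_contra! hle
      obtain ⟨i, ⟨hri, hij⟩, hi⟩ := hw.exists_mem_Icc_eq hrj (t := w r - k) (by omega) (by omega)
      exact hfirst (i - r) (by omega) (by rw [Nat.add_sub_cancel' hri]; omega)
    intro j hj
    rcases le_or_gt r j with hrj | hjr
    · exact hwindow j hrj hj
    · have := hwindow (j + n) (by omega) (by omega)
      have := hper j
      omega
  · intro hrec
    refine ⟨by omega, fun m hm => ?_⟩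
    have := hrec (r + m) (by omega)
    omega

theorem card_filter_isFirstPassageTime_shift (hw : SkipFree w)
    (hper : ∀ j, w (j + n) = w j - k) (hn : 0 < n) :
    #{r ∈ range n | IsFirstPassageTime (fun m => w (r + m) - w r) (-k) n} = k := by
  obtain ⟨n, rfl⟩ : ∃ n', n = n' + 1 := ⟨n - 1, by omega⟩
  have hrec : ∀ r ∈ range (n + 1), IsFirstPassageTime (fun m => w (r + m) - w r) (-k) (n + 1)
      ↔ w (n + r + 1) < runningMin w (n + r) := fun r hr => by
    rw [hw.isFirstPassageTime_shift_iff hper (mem_range.1 hr), lt_runningMin_iff]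
    simp only [show r + (n + 1) = n + r + 1 by omega, Nat.lt_succ_iff]
  have : (#{r ∈ range (n + 1) | IsFirstPassageTime (fun m => w (r + m) - w r) (-k) (n + 1)} : ℤ)
      = k := calc
    _ = ∑ r ∈ range (n + 1), if w (n + r + 1) < runningMin w (n + r) then (1 : ℤ) else 0 := by
      rw [← sum_boole]
      exact sum_congr rfl fun r hr => if_congr (hrec r hr) rfl rfl
    _ = ∑ r ∈ range (n + 1), (runningMin w (n + r) - runningMin w (n + (r + 1))) :=
      sum_congr rfl fun r _ => (hw.runningMin_sub_runningMin_succ (n + r)).symm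
    _ = runningMin w n - runningMin w (n + (n + 1)) :=
      sum_range_sub' (fun r => runningMin w (n + r)) (n + 1)
    _ = k := by rw [runningMin_add_period hper le_rfl]; ring
  exact_mod_cast this

end SkipFree

def walk (x : ℕ → ℕ) (m : ℕ) : ℤ := ∑ i ∈ range m, ((x i : ℤ) - 1)

section Walk

variable {x x' : ℕ → ℕ} {n k : ℕ}

theorem skipFree_walk (x : ℕ → ℕ) : SkipFree (walk x) := fun i => by
  simp only [walk, sum_range_succ]
  omega

theorem walk_add (x : ℕ → ℕ) (j m : ℕ) :
    walk x (j + m) = walk x j + walk (fun i => x (j + i)) m :=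
  sum_range_add _ j m

theorem walk_add_period (hx : Function.Periodic x n) (j : ℕ) :
    walk x (j + n) = walk x j + walk x n := by
  have hshift : (fun i => x (n + i)) = x := funext fun i => by rw [add_comm]; exact hx i
  rw [add_comm j, walk_add, hshift, add_comm]

theorem walk_eq_neg_iff {m : ℕ} : walk x m = -k ↔ ((∑ i ∈ range m, x i : ℕ) : ℤ) = m - k := by
  simp only [walk, sum_sub_distrib, sum_const, card_range, nsmul_eq_mul, mul_one, Nat.cast_sum]
  omega

theorem walk_congr {m : ℕ} (h : ∀ i < m, x i = x' i) : walk x m = walk x' m :=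
  sum_congr rfl fun i hi => by rw [h i (mem_range.1 hi)]

theorem isFirstPassageTime_walk_congr (h : ∀ i < n, x i = x' i) {t : ℤ} :
    IsFirstPassageTime (walk x) t n ↔ IsFirstPassageTime (walk x') t n := by
  have hwalk : ∀ m ≤ n, walk x m = walk x' m := fun m hm =>
    walk_congr fun i hi => h i (by omega)
  simp only [IsFirstPassageTime, hwalk n le_rfl]
  exact and_congr_right' (forall₂_congr fun m hm => by rw [hwalk m hm.le])

theorem card_filter_isFirstPassageTime_walk_shift (hx : Function.Periodic x n) (hn : 0 < n)
    (hsum : walk x n = -k) :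
    #{r ∈ range n | IsFirstPassageTime (walk fun i => x (r + i)) (-k) n} = k := by
  have hshift : ∀ r, walk (fun i => x (r + i)) = fun m => walk x (r + m) - walk x r :=
    fun r => funext fun m => by rw [walk_add]; ring
  simp only [hshift]
  exact (skipFree_walk x).card_filter_isFirstPassageTime_shift
    (fun j => by rw [walk_add_period hx, hsum]; ring) hn

end Walk

section Rotation

-- `((i : ℕ) : Fin n)` is `i % n`, so `fun i : ℕ => y i` is the `n`-periodic extension of `y`.
open Fin.NatCast

variable {n : ℕ} [NeZero n]

theorem sum_indicator_isFirstPassageTime_rotate (k : ℕ) (y : Fin n → ℕ) :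
    ∑ r ∈ range n, {y : Fin n → ℕ | IsFirstPassageTime (walk fun i => y i) (-k) n}.indicator 1
        (fun i => y (i + r))
      = {y : Fin n → ℕ | walk (fun i => y i) n = -k}.indicator (fun _ => (k : ℝ≥0∞)) y := by
  set x : ℕ → ℕ := fun i => y i
  have hx : Function.Periodic x n := fun i => by simp [x]
  have hrot : ∀ r : ℕ, (fun i : ℕ => y ((i : Fin n) + r)) = fun i => x (r + i) := fun r => by
    funext i
    simp [x, add_comm]
  simp only [Set.indicator_apply, Set.mem_ofPred_eq, Pi.one_apply, hrot, sum_boole]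
  split_ifs with hsum
  · rw [card_filter_isFirstPassageTime_walk_shift hx (NeZero.pos n) hsum]
  · rw [filter_false_of_mem, card_empty, Nat.cast_zero]
    intro r _ hr
    exact hsum (by linarith [walk_add x r n, walk_add_period hx r, hr.1])

end Rotation

theorem card_mul_measure_eq_of_sum_indicator {ι α : Type*} [MeasurableSpace α] {ν : Measure α}
    {s : Finset ι} {f : ι → α → α} (hf : ∀ i ∈ s, MeasurePreserving (f i) ν ν) {G B : Set α}
    (hG : MeasurableSet G) (hB : MeasurableSet B) {c : ℝ≥0∞}
    (hsum : ∀ y, ∑ i ∈ s, G.indicator 1 (f i y) = B.indicator (fun _ => c) y) :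
    #s * ν G = c * ν B := calc
  #s * ν G = ∑ i ∈ s, ∫⁻ y, G.indicator 1 (f i y) ∂ν := by
    rw [← nsmul_eq_mul, ← sum_const]
    refine sum_congr rfl fun i hi => ?_
    rw [(hf i hi).lintegral_comp (measurable_one.indicator hG), lintegral_indicator_one hG]
  _ = ∫⁻ y, ∑ i ∈ s, G.indicator 1 (f i y) ∂ν :=
    (lintegral_finsetSum _ fun i hi =>
      (measurable_one.indicator hG).comp (hf i hi).measurable).symm
  _ = c * ν B := by simp_rw [hsum, lintegral_indicator_const hB]

end Kemperman

theorem ProbabilityTheory.iIndepFun.measurePreserving_comp_perm {Ω ι β : Type*}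
    [MeasurableSpace Ω] [MeasurableSpace β] [Fintype ι] {P : Measure Ω} {X : ι → Ω → β}
    (hX : iIndepFun X P) (hmeas : ∀ i, Measurable (X i))
    (hident : ∀ i j, P.map (X i) = P.map (X j)) (σ : Equiv.Perm ι) :
    MeasurePreserving (fun y i => y (σ i)) (P.map fun ω i => X i ω) (P.map fun ω i => X i ω) := by
  have hperm : Measurable fun (y : ι → β) i => y (σ i) :=
    measurable_pi_lambda _ fun i => measurable_pi_apply _
  refine ⟨hperm, ?_⟩
  rw [Measure.map_map hperm (measurable_pi_lambda _ hmeas), Function.comp_def,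
    (hX.precomp σ.injective).map_fun_eq_pi_map fun i => (hmeas _).aemeasurable,
    hX.map_fun_eq_pi_map fun i => (hmeas i).aemeasurable]
  congr 1
  funext i
  exact hident _ _

theorem kemperman_formula_general
    {Ω : Type*} [MeasurableSpace Ω] (P : Measure Ω)
    (μ : Measure ℕ)
    (X : ℕ → Ω → ℕ) (hmeas : ∀ i, Measurable (X i))
    (hindep : iIndepFun X P)
    (hlaw : ∀ i, P.map (X i) = μ)
    (k n : ℕ) (hkn : k < n) :
    P {ω | ((∑ i ∈ Finset.range n, X i ω : ℕ) : ℤ) = (n : ℤ) - (k : ℤ) ∧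
        ∀ m < n, ((∑ i ∈ Finset.range m, X i ω : ℕ) : ℤ) ≠ (m : ℤ) - (k : ℤ)}
      = ((k : ℝ≥0∞) / (n : ℝ≥0∞)) *
        P {ω | ((∑ i ∈ Finset.range n, X i ω : ℕ) : ℤ) = (n : ℤ) - (k : ℤ)} := by
  open Kemperman Fin.NatCast in
  have : NeZero n := ⟨by omega⟩
  set Y : Ω → Fin n → ℕ := fun ω i => X i ω
  have hY : Measurable Y := measurable_pi_lambda _ fun i => hmeas i
  have hYext : ∀ ω, ∀ i < n, Y ω (i : Fin n) = X i ω := fun ω i hi => by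
    simp only [Y, Fin.val_cast_of_lt hi]
  have hA : {ω | ((∑ i ∈ Finset.range n, X i ω : ℕ) : ℤ) = (n : ℤ) - (k : ℤ) ∧
        ∀ m < n, ((∑ i ∈ Finset.range m, X i ω : ℕ) : ℤ) ≠ (m : ℤ) - (k : ℤ)}
      = Y ⁻¹' {y | IsFirstPassageTime (walk fun i => y i) (-k) n} := by
    ext ω
    simp only [Set.mem_preimage, Set.mem_ofPred_eq]
    rw [isFirstPassageTime_walk_congr (x' := fun i => X i ω) (hYext ω)]
    simp only [IsFirstPassageTime, ne_eq, walk_eq_neg_iff]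
  have hB : {ω | ((∑ i ∈ Finset.range n, X i ω : ℕ) : ℤ) = (n : ℤ) - (k : ℤ)}
      = Y ⁻¹' {y | walk (fun i => y i) n = -k} := by
    ext ω
    simp only [Set.mem_preimage, Set.mem_ofPred_eq]
    rw [walk_congr (x' := fun i => X i ω) (hYext ω), walk_eq_neg_iff]
  have hcount := card_mul_measure_eq_of_sum_indicator (s := range n)
    (fun r _ => (hindep.precomp Fin.val_injective).measurePreserving_comp_perm (fun i => hmeas i)
      (fun i j => (hlaw i).trans (hlaw j).symm) (Equiv.addRight (r : Fin n)))
    .of_discrete .of_discrete (sum_indicator_isFirstPassageTime_rotate k)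
  rw [card_range] at hcount
  rw [hA, hB, ← Measure.map_apply hY .of_discrete, ← Measure.map_apply hY .of_discrete,
    ENNReal.div_eq_inv_mul, mul_assoc, ← hcount, ← mul_assoc,
    ENNReal.inv_mul_cancel (by simp; omega) (ENNReal.natCast_ne_top n), one_mul]

/-- **Kemperman's formula.** Let `(X i)` be i.i.d. nonnegative integer-valued
random variables, `S n = X 1 + ... + X n`, and `T k` the first passage time of the walk
`S n - n` to `-k`.  For every `1 ≤ k < n`, `P(T k = n) = (k / n) P(S n = n - k)`. -/
theorem kemperman_formula
    {Ω : Type*} [MeasurableSpace Ω] (P : Measure Ω) [IsProbabilityMeasure P]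
    (μ : Measure ℕ) [IsProbabilityMeasure μ]
    (X : ℕ → Ω → ℕ) (hmeas : ∀ i, Measurable (X i))
    (hindep : iIndepFun X P)
    (hlaw : ∀ i, P.map (X i) = μ)
    (k n : ℕ) (hk : 1 ≤ k) (hkn : k < n) :
    P {ω | ((∑ i ∈ Finset.range n, X i ω : ℕ) : ℤ) = (n : ℤ) - (k : ℤ) ∧
        ∀ m < n, ((∑ i ∈ Finset.range m, X i ω : ℕ) : ℤ) ≠ (m : ℤ) - (k : ℤ)}
      = ((k : ℝ≥0∞) / (n : ℝ≥0∞)) *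
        P {ω | ((∑ i ∈ Finset.range n, X i ω : ℕ) : ℤ) = (n : ℤ) - (k : ℤ)} :=
  kemperman_formula_general P μ X hmeas hindep hlaw k n hkn
end

section
/- Dwass's identity: let (X_i) be i.i.d. nonnegative integer-valued random variables, S_n = X_1 + ... + X_n, and T_k = inf{n ≥ 0 : S_n = n − k}. Then the process (T_k)_{k≥0} has independent and identically distributed increments; that is, T_k − T_{k−1}, k ≥ 1, are i.i.d., each distributed as T_1. -/
/-!
The walk `m ↦ S m - m` is downward skip-free, so it passes through `-k` before `-(k + 1)`, and
once it has reached `-k` at time `N` it restarts: `T (k + l) = N + T' l`, where `T'` are the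
passage times of the shifted sequence `X (N + ·)`. Hence the event `{T (j+1) - T j = t j, j < K}`
is `{T 1 = t 0}`, which depends only on `X 0, …, X (t 0 - 1)`, intersected with the same event
for `X (t 0 + ·)` and the shifted increments. These two blocks of coordinates are independent and
the shifted sequence is again i.i.d. with law `μ`, so induction on `K` factorises the probability
as a product of laws of `T 1`, each of which depends only on `μ`.
-/

open MeasureTheory ProbabilityTheory

lemma ProbabilityTheory.iIndepFun.indepFun_of_disjoint_range {Ω ι κ κ' β : Type*}
    [MeasurableSpace Ω] [MeasurableSpace β] {P : Measure Ω} {X : ι → Ω → β}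
    (hX : iIndepFun X P) (hmeas : ∀ i, Measurable (X i)) {g : κ → ι} {h : κ' → ι}
    (hgh : Disjoint (Set.range g) (Set.range h)) :
    IndepFun (fun ω k => X (g k) ω) (fun ω k => X (h k) ω) P := by
  rw [IndepFun_iff_Indep]
  refine indep_of_indep_of_le_right (indep_of_indep_of_le_left
    (indep_iSup_of_disjoint (fun i => (hmeas i).comap_le) hX.iIndep hgh) ?_) ?_ <;>
  · rw [MeasurableSpace.pi, MeasurableSpace.comap_iSup]
    refine iSup_le fun k => ?_
    rw [MeasurableSpace.comap_comp]
    exact le_iSup₂_of_le _ ⟨k, rfl⟩ le_rfl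

lemma ENat.sInf_image_natCast_eq_natCast_iff {A : Set ℕ} {N : ℕ} :
    sInf ((↑) '' A : Set ℕ∞) = N ↔ N ∈ A ∧ ∀ m < N, m ∉ A := by
  constructor
  · intro h
    have hA : A.Nonempty := by
      by_contra hA
      simp [Set.not_nonempty_iff_eq_empty.mp hA] at h
    rw [sInf_image, ← ENat.natCast_sInf hA, Nat.cast_inj] at h
    exact h ▸ ⟨Nat.sInf_mem hA, fun m hm => Nat.notMem_of_lt_sInf hm⟩
  · rintro ⟨hN, hmin⟩
    refine IsLeast.csInf_eq ⟨⟨N, hN, rfl⟩, ?_⟩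
    rintro _ ⟨m, hm, rfl⟩
    exact Nat.cast_le.mpr (not_lt.mp fun h => hmin m h hm)

/-- `S m = m - k` is written in `ℕ` as `S m + k = m`; `sInf ∅ = ⊤` encodes a walk that never
reaches `-k`. -/
noncomputable def firstPassage (f : ℕ → ℕ) (k : ℕ) : ℕ∞ :=
  sInf ((↑) '' {m : ℕ | ∑ i ∈ Finset.range m, f i + k = m})

namespace firstPassage

variable {f g : ℕ → ℕ} {k N : ℕ}

lemma eq_natCast_iff : firstPassage f k = N ↔
    ∑ i ∈ Finset.range N, f i + k = N ∧ ∀ m < N, ∑ i ∈ Finset.range m, f i + k ≠ m :=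
  ENat.sInf_image_natCast_eq_natCast_iff

@[simp]
lemma zero_right (f : ℕ → ℕ) : firstPassage f 0 = 0 := by
  simpa using (eq_natCast_iff (f := f) (k := 0) (N := 0)).mpr (by simp)

lemma le_of_mem {m : ℕ} (hm : ∑ i ∈ Finset.range m, f i + k = m) : firstPassage f k ≤ m :=
  sInf_le ⟨m, hm, rfl⟩

/-- The walk `m ↦ ∑_{i<m} f i - m` goes down by at most one per step, so it stays above `-k`
before it first hits it. -/
lemma lt_sum_add_of_lt {m : ℕ} (hm : (m : ℕ∞) < firstPassage f k) :
    m < ∑ i ∈ Finset.range m, f i + k := by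
  induction m with
  | zero =>
    rcases Nat.eq_zero_or_pos k with rfl | hk
    · simp at hm
    · simpa using hk
  | succ m ih =>
    have ih := ih (lt_of_le_of_lt (by simp) hm)
    have hne : ∑ i ∈ Finset.range (m + 1), f i + k ≠ m + 1 := fun h =>
      (le_of_mem h).not_gt (by exact_mod_cast hm)
    rw [Finset.sum_range_succ] at hne ⊢
    omega

lemma add_of_eq_natCast (h : firstPassage f k = N) (l : ℕ) :
    firstPassage f (k + l) = N + firstPassage (fun i => f (N + i)) l := by
  obtain ⟨hN, hmin⟩ := eq_natCast_iff.mp h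
  have hits : {m : ℕ | ∑ i ∈ Finset.range m, f i + (k + l) = m} =
      (N + ·) '' {r : ℕ | ∑ i ∈ Finset.range r, f (N + i) + l = r} := by
    ext m
    rcases lt_or_ge m N with hm | hm
    · have := lt_sum_add_of_lt (h ▸ (by exact_mod_cast hm : (m : ℕ∞) < N))
      simp only [Set.mem_ofPred_eq, Set.mem_image]
      constructor
      · omega
      · rintro ⟨r, -, rfl⟩
        omega
    · obtain ⟨r, rfl⟩ := Nat.exists_eq_add_of_le hm
      simp only [Set.mem_ofPred_eq, Set.mem_image, add_right_inj, exists_eq_right,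
        Finset.sum_range_add]
      omega
  rw [firstPassage, hits, Set.image_image, sInf_image, firstPassage, sInf_image,
    ENat.add_iInf₂]
  simp only [Nat.cast_add]

lemma eq_natCast_congr (hfg : ∀ i < N, f i = g i) :
    firstPassage f k = N ↔ firstPassage g k = N := by
  have hsum : ∀ m ≤ N, ∑ i ∈ Finset.range m, f i = ∑ i ∈ Finset.range m, g i :=
    fun m hm => Finset.sum_congr rfl fun i hi => hfg i (by simp at hi; omega)
  simp only [eq_natCast_iff]
  refine and_congr (by rw [hsum N le_rfl]) (forall₂_congr fun m hm => ?_)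
  rw [hsum m hm.le]

lemma increments_succ_iff {K : ℕ} (t : Fin (K + 1) → ℕ) :
    (∀ j : Fin (K + 1), firstPassage f (j + 1) = firstPassage f j + t j) ↔
      firstPassage f 1 = t 0 ∧ ∀ j : Fin K,
        firstPassage (fun i => f (t 0 + i)) (j + 1) =
          firstPassage (fun i => f (t 0 + i)) j + t j.succ := by
  rw [Fin.forall_fin_succ]
  simp only [Fin.val_zero, zero_add, zero_right, Fin.val_succ]
  refine and_congr_right fun h1 => forall_congr' fun j => ?_
  have shift (l : ℕ) : firstPassage f (l + 1) = t 0 + firstPassage (fun i => f (t 0 + i)) l := by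
    rw [add_comm]
    exact add_of_eq_natCast h1 l
  rw [shift, shift, add_assoc, (ENat.add_right_injective_of_ne_top (ENat.natCast_ne_top _)).eq_iff]

lemma measurable (k : ℕ) : Measurable (fun f : ℕ → ℕ => firstPassage f k) := by
  have hsum (m : ℕ) : Measurable (fun f : ℕ → ℕ => ∑ i ∈ Finset.range m, f i + k) :=
    (Finset.measurable_sum _ fun i _ => measurable_pi_apply i).add_const k
  refine ENat.measurable_iff.mpr fun N => ?_
  simp only [Set.preimage, Set.mem_singleton_iff, eq_natCast_iff, Set.ofPred_and,
    Set.ofPred_forall]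
  exact (measurableSet_eq_fun (hsum N) measurable_const).inter
    (.iInter fun m => .iInter fun _ => (measurableSet_eq_fun (hsum m) measurable_const).compl)

end firstPassage

lemma measure_preimage_eq_infinitePi {Ω : Type*} [MeasurableSpace Ω] {P : Measure Ω}
    {μ : Measure ℕ} [IsProbabilityMeasure μ] {X : ℕ → Ω → ℕ} (hmeas : ∀ i, Measurable (X i))
    (hindep : iIndepFun X P) (hlaw : ∀ i, P.map (X i) = μ) {A : Set (ℕ → ℕ)}
    (hA : MeasurableSet A) :
    P ((fun ω i => X i ω) ⁻¹' A) = Measure.infinitePi (fun _ => μ) A := by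
  rw [← Measure.map_apply (measurable_pi_lambda _ hmeas) hA,
    hindep.map_fun_eq_infinitePi_map hmeas]
  simp only [hlaw]

lemma measure_firstPassage_eq {Ω : Type*} [MeasurableSpace Ω] {P : Measure Ω}
    {μ : Measure ℕ} [IsProbabilityMeasure μ] {X : ℕ → Ω → ℕ} (hmeas : ∀ i, Measurable (X i))
    (hindep : iIndepFun X P) (hlaw : ∀ i, P.map (X i) = μ) (k N : ℕ) :
    P {ω | firstPassage (X · ω) k = N} =
      Measure.infinitePi (fun _ => μ) {f | firstPassage f k = N} :=
  measure_preimage_eq_infinitePi hmeas hindep hlaw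
    (firstPassage.measurable k (measurableSet_singleton _))

theorem measure_firstPassage_increments {Ω : Type*} [MeasurableSpace Ω] {P : Measure Ω}
    [IsProbabilityMeasure P] {μ : Measure ℕ} [IsProbabilityMeasure μ] {X : ℕ → Ω → ℕ}
    (hmeas : ∀ i, Measurable (X i)) (hindep : iIndepFun X P) (hlaw : ∀ i, P.map (X i) = μ)
    (K : ℕ) (t : Fin K → ℕ) :
    P {ω | ∀ j : Fin K, firstPassage (X · ω) (j + 1) = firstPassage (X · ω) j + t j} =
      ∏ j, Measure.infinitePi (fun _ => μ) {f | firstPassage f 1 = t j} := by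
  induction K generalizing X with
  | zero => simp
  | succ K ih =>
    set n := t 0
    let extend (v : Fin n → ℕ) (i : ℕ) : ℕ := if h : i < n then v ⟨i, h⟩ else 0
    have hfirst : {ω | firstPassage (X · ω) 1 = n} =
        (fun ω (i : Fin n) => X i ω) ⁻¹' {v | firstPassage (extend v) 1 = n} := by
      ext ω
      exact firstPassage.eq_natCast_congr fun i hi => by simp [extend, hi]
    have hsplit : {ω | ∀ j : Fin (K + 1),
        firstPassage (X · ω) (j + 1) = firstPassage (X · ω) j + t j} =
        {ω | firstPassage (X · ω) 1 = n} ∩ (fun ω i => X (n + i) ω) ⁻¹'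
          {f | ∀ j : Fin K, firstPassage f (j + 1) = firstPassage f j + Fin.tail t j} := by
      ext ω
      exact firstPassage.increments_succ_iff t
    have hindep_blocks := hindep.indepFun_of_disjoint_range hmeas
      (g := fun i : Fin n => (i : ℕ)) (h := (n + ·)) <| by
        rw [Set.disjoint_left]
        rintro _ ⟨i, rfl⟩ ⟨r, hr⟩
        have := i.isLt
        simp only at hr
        omega
    have htail_meas : MeasurableSet
        {f : ℕ → ℕ | ∀ j : Fin K, firstPassage f (j + 1) = firstPassage f j + Fin.tail t j} :=
      Set.ofPred_forall _ ▸ .iInter fun j => measurableSet_eq_fun (firstPassage.measurable _)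
        ((firstPassage.measurable _).add_const _)
    rw [hsplit, hfirst, hindep_blocks.measure_inter_preimage_eq_mul _ _
      (Set.to_countable _).measurableSet htail_meas, ← hfirst, Fin.prod_univ_succ,
      measure_firstPassage_eq hmeas hindep hlaw]
    congr 1
    exact ih (fun _ => hmeas _) (hindep.precomp (add_right_injective n)) (fun _ => hlaw _) _

/-- **Dwass's identity.** Let `(X i)` be i.i.d. nonnegative integer-valued random
variables, `S n = X 1 + ... + X n`, and `T k = inf {n ≥ 0 : S n = n - k}` (with value `∞` if no
such `n` exists).  Then the process `(T k)` has i.i.d. increments, each distributed as `T 1`: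
for every `K` and finite values `t : Fin K → ℕ`,
`P(∀ j < K, T (j+1) = T j + t j) = ∏ j, P(T 1 = t j)`. -/
theorem dwass_iid_increments
    {Ω : Type*} [MeasurableSpace Ω] (P : Measure Ω) [IsProbabilityMeasure P]
    (μ : Measure ℕ) [IsProbabilityMeasure μ]
    (X : ℕ → Ω → ℕ) (hmeas : ∀ i, Measurable (X i))
    (hindep : iIndepFun X P)
    (hlaw : ∀ i, P.map (X i) = μ)
    (T : ℕ → Ω → ℕ∞)
    (hT : ∀ k ω, T k ω =
      sInf ((fun m : ℕ => (m : ℕ∞)) ''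
        {m : ℕ | ((∑ i ∈ Finset.range m, X i ω : ℕ) : ℤ) = (m : ℤ) - (k : ℤ)})) :
    ∀ (K : ℕ) (t : Fin K → ℕ),
      P {ω | ∀ j : Fin K, T ((j : ℕ) + 1) ω = T (j : ℕ) ω + (t j : ℕ∞)}
        = ∏ j : Fin K, P {ω | T 1 ω = (t j : ℕ∞)} := by
  obtain rfl : T = fun k ω => firstPassage (X · ω) k := by
    funext k ω
    rw [hT, firstPassage]
    congr! 2
    ext m
    simp only [Set.mem_ofPred_eq]
    omega
  intro K t
  rw [measure_firstPassage_increments hmeas hindep hlaw K t]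
  exact Finset.prod_congr rfl fun j _ => (measure_firstPassage_eq hmeas hindep hlaw 1 (t j)).symm
end

section
/- For a Galton–Watson process with offspring law μ started from k ancestors, the probability that the total progeny equals n (for 1 ≤ k ≤ n) equals (k/n) P(X_1 + ... + X_n = n − k), where X_1, ..., X_n are i.i.d. with law μ. -/
/-!
Listing the numbers of children of the vertices of a forest of `k` planar trees in depth-first
order is a weight-preserving bijection onto the Łukasiewicz words of length `n`: words with sum
`n - k` whose walk `k + ∑_{i < j} (d i - 1)` stays positive before time `n`. By the cycle lemma
exactly `k` of the `n` cyclic rotations of any word of length `n` and sum `n - k` are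
Łukasiewicz, and rotations preserve the weight `∏ p (d i)`; double counting the pairs
(word, rotation) gives `n · P(T_k = n) = k · P(X 1 + ⋯ + X n = n - k)`.
-/

open scoped ENNReal

/-- Finite planar rooted trees. -/
inductive PTree : Type
  | node : List PTree → PTree

namespace PTree

/-- Number of vertices of a planar rooted tree. -/
def size : PTree → ℕ
  | node l => 1 + (l.attach.map (fun t => size t.1)).sum
decreasing_by
  have := List.sizeOf_lt_of_mem t.2
  simp only [node.sizeOf_spec] at *
  omega

/-- Galton–Watson weight of a tree for the offspring law `p`:
the product over all vertices of `p (number of children)`; this is the probability that the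
genealogical tree of a single ancestor in a Galton–Watson process with reproduction law `p`
equals the given planar tree. -/
noncomputable def wt (p : PMF ℕ) : PTree → ℝ≥0∞
  | node l => p l.length * (l.attach.map (fun t => wt p t.1)).prod
decreasing_by
  have := List.sizeOf_lt_of_mem t.2
  simp only [node.sizeOf_spec] at *
  omega

/-- Depth-first list of the out-degrees (numbers of children) of the vertices of a tree. -/
def degList : PTree → List ℕ
  | node l => l.length :: (l.attach.map (fun t => degList t.1)).flatten
decreasing_by
  have := List.sizeOf_lt_of_mem t.2
  simp only [node.sizeOf_spec] at *
  omega

end PTree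

/-- Planar forests with `k` rooted trees and `n` vertices in total. -/
def PForest (k n : ℕ) : Type := {f : Fin k → PTree // ∑ i, (f i).size = n}

/-- Galton–Watson weight of a forest of `k` trees: the probability that a Galton–Watson
process with offspring law `p` started from `k` ancestors has this genealogical forest. -/
noncomputable def forestWt (p : PMF ℕ) {k n : ℕ} (f : PForest k n) : ℝ≥0∞ :=
  ∏ i, (f.1 i).wt p

/-- Depth-first list of out-degrees of a forest (trees listed from left to right). -/
def forestDegList {k n : ℕ} (f : PForest k n) : List ℕ :=
  (List.ofFn fun i => (f.1 i).degList).flatten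
namespace PTree

theorem ind {motive : PTree → Prop}
    (h : ∀ l : List PTree, (∀ t ∈ l, motive t) → motive (node l)) : ∀ t, motive t
  | node l => h l fun t _ => ind h t
decreasing_by
  have := List.sizeOf_lt_of_mem ‹t ∈ l›
  simp only [node.sizeOf_spec]
  omega

theorem size_node (l : List PTree) : (node l).size = 1 + (l.map size).sum := by
  rw [size]
  simp

theorem wt_node (p : PMF ℕ) (l : List PTree) :
    (node l).wt p = p l.length * (l.map (wt p)).prod := by
  rw [wt]
  simp

theorem degList_node (l : List PTree) :
    (node l).degList = l.length :: (l.map degList).flatten := by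
  rw [degList]
  simp

theorem wt_eq_prod_map_degList (p : PMF ℕ) : ∀ t : PTree, t.wt p = (t.degList.map p).prod := by
  refine ind fun l ih => ?_
  rw [wt_node, degList_node, List.map_cons, List.prod_cons, List.map_flatten, List.prod_flatten,
    List.map_map, List.map_congr_left ih, List.map_map]
  rfl

theorem length_degList : ∀ t : PTree, t.degList.length = t.size := by
  refine ind fun l ih => ?_
  rw [degList_node, size_node, List.length_cons, List.length_flatten, List.map_map,
    Nat.add_comm]
  exact congrArg (1 + List.sum ·) (List.map_congr_left ih)

end PTree

/-- The walk `j ↦ k + ∑_{i < j} (d i - 1)` stays positive up to time `d.length - 1`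
(stated without truncated subtraction). -/
def StaysPositive (k : ℕ) (d : List ℕ) : Prop := ∀ j < d.length, j < k + (d.take j).sum

instance (k : ℕ) : DecidablePred (StaysPositive k) := fun _ => Nat.decidableBallLT _ _

/-- The walk started at `k` first hits `0` at time `d.length`: this is the first passage time
`T_k` when `d` lists the offspring numbers. -/
def IsLukasiewicz (k : ℕ) (d : List ℕ) : Prop := StaysPositive k d ∧ d.sum + k = d.length

instance (k : ℕ) : DecidablePred (IsLukasiewicz k) := fun _ => instDecidableAnd

theorem staysPositive_nil (k : ℕ) : StaysPositive k [] :=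
  fun _ hj => absurd hj (Nat.not_lt_zero _)

theorem staysPositive_cons {k c : ℕ} {d : List ℕ} :
    StaysPositive k (c :: d) ↔ 0 < k ∧ StaysPositive (k - 1 + c) d := by
  constructor
  · intro h
    have hk : 0 < k := by simpa using h 0 (by simp)
    refine ⟨hk, fun j hj => ?_⟩
    have := h (j + 1) (by simpa using hj)
    rw [List.take_succ_cons, List.sum_cons] at this
    omega
  · rintro ⟨hk, h⟩ (_ | j) hj
    · simpa using hk
    · have := h j (by simpa using hj)
      rw [List.take_succ_cons, List.sum_cons]
      omega

theorem staysPositive_append {k : ℕ} {u v : List ℕ} :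
    StaysPositive k (u ++ v) ↔ StaysPositive k u ∧ StaysPositive (k + u.sum - u.length) v := by
  induction u generalizing k with
  | nil => simp [staysPositive_nil]
  | cons c u ih =>
    simp only [List.cons_append, staysPositive_cons, ih, List.sum_cons, List.length_cons]
    constructor
    · rintro ⟨hk, hu, hv⟩
      exact ⟨⟨hk, hu⟩, by convert hv using 1; omega⟩
    · rintro ⟨⟨hk, hu⟩, hv⟩
      exact ⟨hk, hu, by convert hv using 1; omega⟩

theorem StaysPositive.mono {k k' : ℕ} {d : List ℕ} (h : StaysPositive k d) (hk : k ≤ k') :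
    StaysPositive k' d :=
  fun j hj => (h j hj).trans_le (by omega)

theorem staysPositive_of_length_le {k : ℕ} {d : List ℕ} (h : d.length ≤ k) :
    StaysPositive k d :=
  fun j hj => by omega

/-- Merging a step `a + 1` with a following step `0` into a single step `a` skips one time of
the walk, at a value that is not smaller than the one before it. -/
theorem staysPositive_merge {k a : ℕ} {u v : List ℕ} :
    StaysPositive k (u ++ (a + 1) :: 0 :: v) ↔ StaysPositive k (u ++ a :: v) := by
  simp only [staysPositive_append, staysPositive_cons]
  refine and_congr_right fun _ => ⟨?_, ?_⟩
  · rintro ⟨hm, -, hv⟩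
    exact ⟨hm, by convert hv using 1; omega⟩
  · rintro ⟨hm, hv⟩
    exact ⟨hm, by omega, by convert hv using 1; omega⟩

theorem isLukasiewicz_nil : IsLukasiewicz 0 [] := ⟨staysPositive_nil 0, rfl⟩

theorem IsLukasiewicz.append {k k' : ℕ} {d d' : List ℕ} (h : IsLukasiewicz k d)
    (h' : IsLukasiewicz k' d') : IsLukasiewicz (k + k') (d ++ d') := by
  refine ⟨staysPositive_append.2 ⟨h.1.mono (by omega), ?_⟩, ?_⟩
  · convert h'.1 using 1
    have := h.2
    omega
  · simp only [List.sum_append, List.length_append]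
    have := h.2
    have := h'.2
    omega

theorem IsLukasiewicz.cons {c : ℕ} {d : List ℕ} (h : IsLukasiewicz c d) :
    IsLukasiewicz 1 (c :: d) := by
  refine ⟨staysPositive_cons.2 ⟨Nat.one_pos, by simpa using h.1⟩, ?_⟩
  simp only [List.sum_cons, List.length_cons]
  have := h.2
  omega

theorem IsLukasiewicz.of_cons {k c : ℕ} {d : List ℕ} (h : IsLukasiewicz k (c :: d)) :
    0 < k ∧ IsLukasiewicz (k - 1 + c) d := by
  obtain ⟨hk, hd⟩ := staysPositive_cons.1 h.1
  refine ⟨hk, hd, ?_⟩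
  have := h.2
  simp only [List.sum_cons, List.length_cons] at this
  omega

namespace PTree

theorem isLukasiewicz_flatten_map_degList (L : List PTree)
    (h : ∀ t ∈ L, IsLukasiewicz 1 t.degList) :
    IsLukasiewicz L.length (L.map degList).flatten := by
  induction L with
  | nil => exact isLukasiewicz_nil
  | cons t L ih =>
    rw [List.map_cons, List.flatten_cons, List.length_cons, Nat.add_comm]
    exact (h t List.mem_cons_self).append (ih fun t' ht' => h t' (List.mem_cons_of_mem t ht'))

theorem isLukasiewicz_degList : ∀ t : PTree, IsLukasiewicz 1 t.degList := by
  refine ind fun l ih => ?_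
  rw [degList_node]
  exact (isLukasiewicz_flatten_map_degList l ih).cons

theorem length_flatten_map_degList (L : List PTree) :
    (L.map degList).flatten.length = (L.map size).sum := by
  rw [List.length_flatten, List.map_map]
  exact congrArg List.sum (List.map_congr_left fun t _ => length_degList t)

theorem exists_flatten_map_degList_eq {k : ℕ} {d : List ℕ} (h : IsLukasiewicz k d) :
    ∃ L : List PTree, L.length = k ∧ (L.map degList).flatten = d := by
  induction d generalizing k with
  | nil => exact ⟨[], by simpa using h.2.symm, rfl⟩
  | cons c d ih =>
    obtain ⟨hk, hd⟩ := h.of_cons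
    obtain ⟨L, hL, rfl⟩ := ih hd
    refine ⟨node (L.take c) :: L.drop c, ?_, ?_⟩
    · simp only [List.length_cons, List.length_drop]
      omega
    · rw [List.map_cons, List.flatten_cons, degList_node, List.length_take, min_eq_left (by omega),
        List.cons_append, ← List.flatten_append, ← List.map_append, List.take_append_drop]

theorem flatten_map_degList_append_inj {L₁ : List PTree}
    (hprefix : ∀ t ∈ L₁, ∀ t' r r',
      t.degList ++ r = t'.degList ++ r' → t = t' ∧ r = r') :
    ∀ {L₂ : List PTree} {r₁ r₂ : List ℕ}, L₁.length = L₂.length →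
      (L₁.map degList).flatten ++ r₁ = (L₂.map degList).flatten ++ r₂ →
      L₁ = L₂ ∧ r₁ = r₂ := by
  induction L₁ with
  | nil =>
    rintro (_ | _) r₁ r₂ hlen h
    · simpa using h
    · simp at hlen
  | cons t L₁ ihL =>
    rintro (_ | ⟨t', L₂⟩) r₁ r₂ hlen h
    · simp at hlen
    · simp only [List.map_cons, List.flatten_cons, List.append_assoc] at h
      obtain ⟨rfl, hrest⟩ := hprefix t List.mem_cons_self t' _ _ h
      obtain ⟨rfl, rfl⟩ := ihL (fun s hs => hprefix s (List.mem_cons_of_mem t hs))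
        (by simpa using hlen) hrest
      exact ⟨rfl, rfl⟩

theorem degList_append_inj : ∀ {t t' : PTree} {r r' : List ℕ},
    t.degList ++ r = t'.degList ++ r' → t = t' ∧ r = r' := by
  intro t
  induction t using ind with
  | h l ih =>
    rintro ⟨l'⟩ r r' h
    rw [degList_node, degList_node, List.cons_append, List.cons_append, List.cons.injEq] at h
    obtain ⟨rfl, rfl⟩ := flatten_map_degList_append_inj (fun t ht _ _ _ => ih t ht) h.1 h.2
    exact ⟨rfl, rfl⟩

end PTree

section Forests

variable {k n : ℕ}

theorem forestDegList_eq (f : PForest k n) :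
    forestDegList f = ((List.ofFn f.1).map PTree.degList).flatten := by
  rw [forestDegList, List.map_ofFn]
  rfl

theorem forestWt_eq_prod_map_forestDegList (p : PMF ℕ) (f : PForest k n) :
    forestWt p f = ((forestDegList f).map p).prod := by
  rw [forestWt, forestDegList_eq, List.map_flatten, List.prod_flatten, List.map_map, List.map_map,
    List.map_ofFn, List.prod_ofFn]
  exact Finset.prod_congr rfl fun i _ => PTree.wt_eq_prod_map_degList p (f.1 i)

theorem length_forestDegList (f : PForest k n) : (forestDegList f).length = n := by
  rw [forestDegList_eq, PTree.length_flatten_map_degList, List.map_ofFn, List.sum_ofFn]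
  exact f.2

theorem isLukasiewicz_forestDegList (f : PForest k n) : IsLukasiewicz k (forestDegList f) := by
  simpa [forestDegList_eq] using
    PTree.isLukasiewicz_flatten_map_degList (List.ofFn f.1) fun t _ => PTree.isLukasiewicz_degList t

theorem forestDegList_injective :
    Function.Injective (forestDegList : PForest k n → List ℕ) := by
  intro f f' h
  rw [forestDegList_eq, forestDegList_eq] at h
  have := PTree.flatten_map_degList_append_inj (fun t _ _ _ _ => PTree.degList_append_inj)
    (by simp) (congrArg (· ++ []) h)
  exact Subtype.ext (List.ofFn_inj.1 this.1)

theorem exists_forestDegList_eq {d : List ℕ} (hd : d.length = n) (h : IsLukasiewicz k d) :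
    ∃ f : PForest k n, forestDegList f = d := by
  obtain ⟨L, rfl, hL⟩ := PTree.exists_flatten_map_degList_eq h
  have hsize : ∑ i, (L.get i).size = n := by
    rw [← hd, ← hL, PTree.length_flatten_map_degList]
    exact Fin.sum_univ_fun_getElem L PTree.size
  let f : PForest L.length n := ⟨L.get, hsize⟩
  refine ⟨f, ?_⟩
  rw [forestDegList_eq]
  exact (congrArg (fun L => (L.map PTree.degList).flatten) (List.ofFn_get L)).trans hL

end Forests

theorem tsum_forestWt (p : PMF ℕ) (k n : ℕ) :
    ∑' f : PForest k n, forestWt p f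
      = ∑' d : List ℕ, if d.length = n ∧ IsLukasiewicz k d then (d.map p).prod else 0 := by
  rw [← forestDegList_injective.tsum_eq]
  · exact tsum_congr fun f => by
      rw [if_pos ⟨length_forestDegList f, isLukasiewicz_forestDegList f⟩,
        forestWt_eq_prod_map_forestDegList]
  · intro d hd
    obtain ⟨hlen, hd⟩ : d.length = n ∧ IsLukasiewicz k d := by
      by_contra h
      exact hd (if_neg h)
    exact exists_forestDegList_eq hlen hd

theorem tsum_prod_fin_eq_tsum_list (w : ℕ → ℝ≥0∞) (n s : ℕ) :
    ∑' x : {x : Fin n → ℕ // ∑ i, x i = s}, ∏ i, w (x.1 i)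
      = ∑' d : List ℕ, if d.length = n ∧ d.sum = s then (d.map w).prod else 0 := by
  have hinj : Function.Injective fun x : {x : Fin n → ℕ // ∑ i, x i = s} => List.ofFn x.1 :=
    fun x x' h => Subtype.ext (List.ofFn_inj.1 h)
  rw [← hinj.tsum_eq]
  · refine tsum_congr fun x => ?_
    rw [if_pos ⟨List.length_ofFn, by rw [List.sum_ofFn]; exact x.2⟩, List.map_ofFn,
      List.prod_ofFn]
    rfl
  · intro d hd
    obtain ⟨rfl, hs⟩ : d.length = n ∧ d.sum = s := by
      by_contra h
      exact hd (if_neg h)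
    exact ⟨⟨d.get, by rw [← List.sum_ofFn, List.ofFn_get, hs]⟩, List.ofFn_get d⟩

def rotationCount (k : ℕ) (d : List ℕ) : ℕ :=
  (List.range d.length).countP fun r => StaysPositive k (d.rotate r)

theorem map_rotate_range_length {α : Type*} {l : List α} (hl : l ≠ []) :
    (List.range l.length).map l.rotate = l.cyclicPermutations := by
  refine List.ext_getElem (by simp [List.length_cyclicPermutations_of_ne_nil l hl]) fun i _ _ => ?_
  simp [List.getElem_cyclicPermutations]

theorem rotationCount_rotate (k : ℕ) (d : List ℕ) (s : ℕ) :
    rotationCount k (d.rotate s) = rotationCount k d := by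
  rcases eq_or_ne d [] with rfl | hd
  · simp
  have hcyc : ∀ l : List ℕ, l ≠ [] →
      rotationCount k l = l.cyclicPermutations.countP fun c => StaysPositive k c := fun l hl => by
    rw [← map_rotate_range_length hl, List.countP_map]
    rfl
  rw [hcyc _ (by simpa using hd), hcyc _ hd, List.cyclicPermutations_rotate]
  exact (List.rotate_perm _ _).countP_eq _

theorem rotationCount_append_succ_zero {k a : ℕ} {e : List ℕ}
    (h : e.sum + a + k = e.length + 1) :
    rotationCount k (e ++ [a + 1, 0]) = rotationCount k (e ++ [a]) := by
  have hlast : ¬ StaysPositive k ((e ++ [a + 1, 0]).rotate (e.length + 1)) := by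
    have hrot : (e ++ [a + 1, 0]).rotate (e.length + 1) = (0 :: e) ++ [a + 1] := by
      simpa using List.rotate_append_length_eq (e ++ [a + 1]) [0]
    intro hpos
    rw [hrot, staysPositive_append, staysPositive_cons (d := [])] at hpos
    have := hpos.2.1
    simp only [List.sum_cons, List.length_cons] at this
    omega
  have hmid : ∀ r ≤ e.length, StaysPositive k ((e ++ [a + 1, 0]).rotate r) ↔
      StaysPositive k ((e ++ [a]).rotate r) := fun r hr => by
    rw [List.rotate_eq_drop_append_take (by simp; omega),
      List.rotate_eq_drop_append_take (by simp; omega), List.drop_append_of_le_length hr,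
      List.take_append_of_le_length hr, List.drop_append_of_le_length hr,
      List.take_append_of_le_length hr]
    simpa using staysPositive_merge
  have hl₁ : (e ++ [a + 1, 0]).length = e.length + 1 + 1 := by simp
  have hl₂ : (e ++ [a]).length = e.length + 1 := by simp
  rw [rotationCount, rotationCount, hl₁, hl₂, List.range_succ (n := e.length + 1),
    List.countP_append, List.countP_singleton, if_neg (by simpa using hlast), add_zero]
  exact List.countP_congr fun r hr => by simpa using hmid r (by simp at hr; omega)

theorem exists_cons_eq_append_succ_zero {b : ℕ} {l : List ℕ} (h : 0 ∈ l) :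
    ∃ u a v, (b + 1) :: l = u ++ (a + 1) :: 0 :: v := by
  induction l generalizing b with
  | nil => simp at h
  | cons c l ih =>
    rcases c with _ | c
    · exact ⟨[], b, l, rfl⟩
    · obtain ⟨u, a, v, huv⟩ := ih (b := c) (by simpa using h)
      exact ⟨(b + 1) :: u, a, v, by rw [huv]; rfl⟩

theorem exists_rotate_eq_append_succ_zero {d : List ℕ} (h₀ : 0 ∈ d)
    (h₁ : ∃ x ∈ d, x ≠ 0) :
    ∃ r e a, d.rotate r = e ++ [a + 1, 0] := by
  obtain ⟨_ | b, hb, hb0⟩ := h₁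
  · exact absurd rfl hb0
  obtain ⟨A, B, rfl⟩ := List.append_of_mem hb
  have hrot : (A ++ (b + 1) :: B).rotate A.length = (b + 1) :: (B ++ A) :=
    List.rotate_append_length_eq A _
  obtain ⟨u, a, v, huv⟩ := exists_cons_eq_append_succ_zero (b := b) (l := B ++ A)
    (by simpa [or_comm] using h₀)
  refine ⟨A.length + (u.length + 2), v ++ u, a, ?_⟩
  rw [← List.rotate_rotate, hrot, huv]
  simpa using List.rotate_append_length_eq (u ++ [a + 1, 0]) v

/-- Cycle lemma (Dvoretzky–Motzkin), by merging a cyclic pattern `a + 1, 0` into `a`. -/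
theorem rotationCount_eq {k : ℕ} (hk : 0 < k) {d : List ℕ} (h : d.sum + k = d.length) :
    rotationCount k d = k := by
  obtain ⟨s, hs⟩ : ∃ s, d.sum = s := ⟨_, rfl⟩
  induction s generalizing d with
  | zero =>
    rw [rotationCount, List.countP_eq_length.2 fun r _ => ?_, List.length_range]
    · omega
    · simp only [decide_eq_true_eq]
      exact staysPositive_of_length_le (by simp; omega)
  | succ s ih =>
    have h₀ : 0 ∈ d := by
      by_contra h₀
      have := List.length_le_sum_of_one_le d fun x hx =>
        Nat.one_le_iff_ne_zero.2 fun hx0 => h₀ (hx0 ▸ hx)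
      omega
    have h₁ : ∃ x ∈ d, x ≠ 0 := by
      by_contra! h₁
      rw [List.sum_eq_zero_iff.2 h₁] at hs
      omega
    obtain ⟨r, e, a, hr⟩ := exists_rotate_eq_append_succ_zero h₀ h₁
    have hsum : e.sum + a = s := by
      have := (List.rotate_perm d r).sum_eq
      simp only [hr, List.sum_append, List.sum_cons, List.sum_nil] at this
      omega
    have hlen : e.length + 2 = d.length := by
      simpa using (congrArg List.length hr).symm
    rw [← rotationCount_rotate k d r, hr, rotationCount_append_succ_zero (by omega),
      ih (by simp; omega) (by simp; omega)]

theorem card_filter_range_eq_countP (n : ℕ) (P : ℕ → Prop) [DecidablePred P] :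
    ((Finset.range n).filter P).card = (List.range n).countP fun r => P r := by
  rw [List.countP_eq_length_filter]
  simp [Finset.card, Multiset.range]

theorem tsum_ite_rotate_eq (P : List ℕ → Prop) [DecidablePred P] (g : List ℕ → ℝ≥0∞)
    (hg : ∀ d r, g (d.rotate r) = g d) (r : ℕ) :
    ∑' d, (if P (d.rotate r) then g d else 0) = ∑' d, if P d then g d else 0 := by
  have hsurj : Function.Surjective fun d : List ℕ => d.rotate r :=
    fun d => ⟨_, List.rotate_eq_iff.2 rfl⟩
  rw [← (List.rotate_injective r).tsum_eq (f := fun d => if P d then g d else 0)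
    (hsurj.range_eq ▸ Set.subset_univ _)]
  simp only [hg]

theorem tsum_rotationCount_mul (k n : ℕ) (g : List ℕ → ℝ≥0∞)
    (hg : ∀ d r, g (d.rotate r) = g d) (hg_length : ∀ d, g d ≠ 0 → d.length = n) :
    ∑' d, (rotationCount k d : ℝ≥0∞) * g d
      = n * ∑' d, if StaysPositive k d then g d else 0 := by
  have hcount : ∀ d, (rotationCount k d : ℝ≥0∞) * g d
      = ∑ r ∈ Finset.range n, if StaysPositive k (d.rotate r) then g d else 0 := fun d => by
    by_cases hd : g d = 0
    · simp [hd]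
    · rw [← Finset.sum_filter, Finset.sum_const, nsmul_eq_mul, card_filter_range_eq_countP,
        ← hg_length d hd]
      rfl
  simp_rw [hcount]
  rw [Summable.tsum_finsetSum fun _ _ => ENNReal.summable]
  simp [tsum_ite_rotate_eq _ g hg]

theorem tsum_ite_isLukasiewicz {k n : ℕ} (hk : 0 < k) (hkn : k ≤ n) (w : ℕ → ℝ≥0∞) :
    n * ∑' d : List ℕ, (if d.length = n ∧ IsLukasiewicz k d then (d.map w).prod else 0)
      = k * ∑' d : List ℕ, if d.length = n ∧ d.sum = n - k then (d.map w).prod else 0 := by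
  set g : List ℕ → ℝ≥0∞ :=
    fun d => if d.length = n ∧ d.sum = n - k then (d.map w).prod else 0
  have hg : ∀ d r, g (d.rotate r) = g d := fun d r => by
    simp only [g, List.length_rotate, (List.rotate_perm d r).sum_eq,
      ((List.rotate_perm d r).map w).prod_eq]
  have hg_length : ∀ d, g d ≠ 0 → d.length = n := fun d hd => by
    by_contra h
    exact hd (if_neg fun h' => h h'.1)
  have hcount : ∀ d, (rotationCount k d : ℝ≥0∞) * g d = k * g d := fun d => by
    by_cases hd : d.length = n ∧ d.sum = n - k
    · rw [rotationCount_eq hk (by omega)]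
    · simp [g, hd]
  calc n * ∑' d : List ℕ, (if d.length = n ∧ IsLukasiewicz k d then (d.map w).prod else 0)
      = n * ∑' d, if StaysPositive k d then g d else 0 := by
        congr 1
        refine tsum_congr fun d => ?_
        simp only [g, IsLukasiewicz, ← ite_and]
        refine if_congr ⟨?_, ?_⟩ rfl rfl
        · rintro ⟨hl, hp, hs⟩
          exact ⟨hp, hl, by omega⟩
        · rintro ⟨hp, hl, hs⟩
          exact ⟨hl, hp, by omega⟩
    _ = ∑' d, (rotationCount k d : ℝ≥0∞) * g d :=
        (tsum_rotationCount_mul k n g hg hg_length).symm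
    _ = k * ∑' d, g d := by simp_rw [hcount, ENNReal.tsum_mul_left]

/-- For a Galton–Watson process with offspring law `p` started from `k`
ancestors, the probability that the total progeny equals `n` (for `1 ≤ k ≤ n`) equals
`(k / n) · P(X 1 + ... + X n = n - k)` where the `X i` are i.i.d. with law `p`. -/
theorem gw_total_progeny_eq
    (p : PMF ℕ) (k n : ℕ) (hk : 1 ≤ k) (hkn : k ≤ n) :
    (∑' f : PForest k n, forestWt p f)
      = ((k : ℝ≥0∞) / (n : ℝ≥0∞)) *
        ∑' x : {x : Fin n → ℕ // ∑ i, x i = n - k}, ∏ i, p (x.1 i) := by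
  have hn : (n : ℝ≥0∞) ≠ 0 := by exact_mod_cast (by omega : n ≠ 0)
  rw [tsum_forestWt, tsum_prod_fin_eq_tsum_list, ← ENNReal.mul_div_right_comm,
    ENNReal.eq_div_iff hn (ENNReal.natCast_ne_top n)]
  exact tsum_ite_isLukasiewicz hk hkn p
end

section
/- Uniformity propagates one step in the grabbing particle algorithm: let Φ_0 and Φ_1 be the sets of configurations at times 0 and 1 of the grabbing particle system with arm counts (x_1,...,x_n) summing to n − k (k ≥ 1). Every configuration φ ∈ Φ_1 arises from exactly n configurations in Φ_0 (obtained by pruning the unique complete edge of φ at its right-end and reinserting that vertex among the n − 1 roots), each with transition probability 1/(n−1). Consequently, if the initial state is uniform on Φ_0 then the state at time 1 is uniform on Φ_1. -/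
open scoped ENNReal
open Classical

/-! ### The grabbing particle system

`n` particles are labeled by `Fin n`; particle `i` carries `x i` arms.  The arms are enumerated
uniformly at random and activated in that order; an activated arm grabs a particle chosen
uniformly at random among the particles that have not been grabbed yet and do not belong to the
cluster of the arm's owner; the grabbed particle becomes the right-end of the new directed
edge.  Particles initially lie on the horizontal axis in a uniformly random order. -/

/-- The arms: arm `a` of particle `i`. -/
def ArmIdx (n : ℕ) (x : Fin n → ℕ) : Type := Σ i : Fin n, Fin (x i)

instance (n : ℕ) (x : Fin n → ℕ) : Fintype (ArmIdx n x) := by unfold ArmIdx; infer_instance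
instance (n : ℕ) (x : Fin n → ℕ) : DecidableEq (ArmIdx n x) := by unfold ArmIdx; infer_instance

/-- Total number of arms. -/
def NArms (n : ℕ) (x : Fin n → ℕ) : ℕ := ∑ i, x i

instance (n : ℕ) (x : Fin n → ℕ) : Nonempty (Fin (NArms n x) ≃ ArmIdx n x) :=
  ⟨Fintype.equivOfCardEq (by rw [Fintype.card_fin]; simp [ArmIdx, NArms])⟩

/-- One step towards the root of the cluster of `v`, given the arm enumeration `e` and the
sequence `g` of particles grabbed by the first `t` arms: the owner of the arm that grabbed `v`,
or `v` itself if `v` has not been grabbed. -/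
noncomputable def parentStep {n : ℕ} {x : Fin n → ℕ} (e : Fin (NArms n x) ≃ ArmIdx n x)
    {t : ℕ} (ht : t ≤ NArms n x) (g : Fin t → Fin n) (v : Fin n) : Fin n :=
  if h : ∃ s : Fin t, g s = v then (e (Fin.castLE ht h.choose)).1 else v

/-- The root of the cluster currently containing `v` (obtained by iterating `parentStep`
`n` times, which suffices since clusters have at most `n` particles). -/
noncomputable def clusterRoot {n : ℕ} {x : Fin n → ℕ} (e : Fin (NArms n x) ≃ ArmIdx n x)
    {t : ℕ} (ht : t ≤ NArms n x) (g : Fin t → Fin n) (v : Fin n) : Fin n :=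
  (parentStep e ht g)^[n] v

/-- Running the grabbing dynamics from time `t` onwards, given the arm enumeration `e` and the
grabs made so far: at each step the active arm grabs a uniformly chosen particle among those
not yet grabbed and not in the cluster of the arm's owner.  (If no particle is available —
which never happens along the actual dynamics — a dummy transition is made.)  The result is
the law of the full sequence of grabbed particles. -/
noncomputable def runGrab {n : ℕ} (x : Fin n → ℕ) (e : Fin (NArms n x) ≃ ArmIdx n x) :
    (t : ℕ) → (ht : t ≤ NArms n x) → (Fin t → Fin n) → PMF (Fin (NArms n x) → Fin n) :=
  fun t ht g =>
    if h : t < NArms n x then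
      let owner : Fin n := (e ⟨t, h⟩).1
      let S : Finset (Fin n) := Finset.univ.filter fun v =>
        (∀ s : Fin t, g s ≠ v) ∧ clusterRoot e ht g owner ≠ v
      if hS : S.Nonempty then
        (PMF.uniformOfFinset S hS).bind fun v => runGrab x e (t + 1) h (Fin.snoc g v)
      else runGrab x e (t + 1) h (Fin.snoc g owner)
    else
      PMF.pure fun s => g (Fin.cast (by omega) s)
termination_by t _ _ => NArms n x - t

/-- The state space recording the randomness of the grabbing particle system with arm counts
`x` : the (uniform) enumeration of the arms, the sequence of grabbed particles (the `t`-th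
activated arm, which is also the edge labeled `t`, points from its owner to the particle
`g t`), and the (uniform) initial ordering of the particles on the axis. -/
def SysSt (n : ℕ) (x : Fin n → ℕ) : Type :=
  (Fin (NArms n x) ≃ ArmIdx n x) × (Fin (NArms n x) → Fin n) × Equiv.Perm (Fin n)

/-- The law of the terminal state of the grabbing particle system with arm counts `x`. -/
noncomputable def sysLaw (n : ℕ) (x : Fin n → ℕ) : PMF (SysSt n x) :=
  (PMF.uniformOfFintype (Fin (NArms n x) ≃ ArmIdx n x)).bind fun e =>
    (PMF.uniformOfFintype (Equiv.Perm (Fin n))).bind fun π =>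
      (runGrab x e 0 (Nat.zero_le _) (fun s => s.elim0)).map fun g => (e, g, π)

section OneStep

variable (n : ℕ) (x : Fin n → ℕ)

/-- `Φ₀`: the configurations at time `0` of the grabbing particle system with arm counts `x`:
a uniformly random left-to-right ordering of the `n` particles on the horizontal axis together
with a uniformly random enumeration of the arms. -/
def Conf0 : Type := Equiv.Perm (Fin n) × (Fin (NArms n x) ≃ ArmIdx n x)

instance : Fintype (Conf0 n x) := by unfold Conf0; infer_instance
instance : Nonempty (Conf0 n x) := by unfold Conf0; infer_instance

/-- The owner of the first arm to be activated. -/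
def firstOwner (h0 : 0 < NArms n x) (s₀ : Conf0 n x) : Fin n := (s₀.2 ⟨0, h0⟩).1

/-- The raw data of a configuration at time `1`: the arm enumeration, the particle grabbed by
the first activated arm (which, with its arms, is shifted to the right-end of that arm), and
the left-to-right ordering of the `n - 1` remaining roots on the axis. -/
def Conf1 : Type := (Fin (NArms n x) ≃ ArmIdx n x) × Fin n × (Fin (n - 1) → Fin n)

instance : Fintype (Conf1 n x) := by unfold Conf1; infer_instance

/-- The transition of the grabbing particle system at time `1`: from the initial configuration
`s₀`, the first activated arm grabs the particle `v`, which is removed from the axis; the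
remaining roots keep their relative order. -/
noncomputable def applyGrab (s₀ : Conf0 n x) (v : Fin n) : Conf1 n x :=
  (s₀.2, v, fun i => ((List.ofFn fun pos : Fin n => s₀.1.symm pos).filter fun w => w ≠ v).getD i v)

/-- `Φ₁`: the set of configurations at time `1`, i.e. those reachable from some initial
configuration by a legitimate first grab (the grabbed particle differs from the grabber). -/
noncomputable def Conf1Reachable (h0 : 0 < NArms n x) : Finset (Conf1 n x) :=
  Finset.univ.filter fun s₁ =>
    ∃ (s₀ : Conf0 n x) (v : Fin n), v ≠ firstOwner n x h0 s₀ ∧ applyGrab n x s₀ v = s₁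

lemma conf1Reachable_nonempty (hn : 2 ≤ n) (h0 : 0 < NArms n x) :
    (Conf1Reachable n x h0).Nonempty := by
  haveI : Nontrivial (Fin n) := Fin.nontrivial_iff_two_le.mpr hn
  obtain ⟨s₀⟩ := (inferInstance : Nonempty (Conf0 n x))
  obtain ⟨v, hv⟩ := exists_ne (firstOwner n x h0 s₀)
  exact ⟨applyGrab n x s₀ v, by
    simp only [Conf1Reachable, Finset.mem_filter, Finset.mem_univ, true_and]
    exact ⟨s₀, v, hv, rfl⟩⟩

/-- The random transition at time `1`: the first activated arm grabs a particle chosen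
uniformly at random among the `n - 1` particles other than its owner, each with probability
`1 / (n - 1)`. -/
noncomputable def stepLaw (hn : 2 ≤ n) (h0 : 0 < NArms n x) (s₀ : Conf0 n x) :
    PMF (Conf1 n x) :=
  PMF.map (applyGrab n x s₀)
    (PMF.uniformOfFinset (Finset.univ.filter fun v => v ≠ firstOwner n x h0 s₀)
      (by
        haveI : Nontrivial (Fin n) := Fin.nontrivial_iff_two_le.mpr hn
        obtain ⟨v, hv⟩ := exists_ne (firstOwner n x h0 s₀)
        exact ⟨v, by simpa using hv⟩))

/-!
A configuration at time `1` records the arm enumeration, the grabbed particle `v` and the order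
of the `n - 1` remaining roots on the axis. The initial configurations leading to it are those
with the same arm enumeration whose axis order, with `v` deleted, is the given one; they are
obtained by reinserting `v` at any of the `n` positions (`List.insertIdx` undoes
`List.eraseIdx`). The constraint that `v` is not the first owner only involves the arm
enumeration, so it holds for all of them. As `v` can be read off the configuration at time `1`,
each such transition has probability `1 / (n - 1)`. The law at time `1` is therefore constant on
`Φ₁` and vanishes outside it, so it is uniform on `Φ₁`.
-/

theorem List.ofFn_getD_of_length_eq {α : Type*} {m : ℕ} {L : List α} (hL : L.length = m)
    (d : α) : List.ofFn (fun i : Fin m => L.getD i d) = L := by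
  subst hL
  exact List.ext_getElem (by simp) fun i _ _ => by simp

theorem PMF.eq_uniformOfFinset_of_apply_eq_ite {α : Type*} (p : PMF α) {s : Finset α}
    (hs : s.Nonempty) {c : ℝ≥0∞} (hp : ∀ a, p a = if a ∈ s then c else 0) :
    p = PMF.uniformOfFinset s hs := by
  have hmass : (s.card : ℝ≥0∞) * c = 1 := by
    rw [← p.tsum_coe, tsum_eq_sum (s := s) fun a ha => by rw [hp, if_neg ha],
      Finset.sum_congr rfl fun a ha => by rw [hp, if_pos ha], Finset.sum_const, nsmul_eq_mul]
  have hc : c = (s.card : ℝ≥0∞)⁻¹ := ENNReal.eq_inv_of_mul_eq_one_left (by rwa [mul_comm])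
  ext a
  rw [hp, PMF.uniformOfFinset_apply, hc]

section PermutationFiber

variable {n}

theorem Equiv.Perm.erase_ofFn_symm_eq_eraseIdx (π : Equiv.Perm (Fin n)) (v : Fin n) :
    (List.ofFn π.symm).erase v = (List.ofFn π.symm).eraseIdx (π v) := by
  have hv : (List.ofFn π.symm)[(π v : ℕ)]'(by simp) = v := by simp
  conv_lhs => rw [← hv]
  exact (List.nodup_ofFn.mpr π.symm.injective).erase_getElem _ _

theorem Equiv.Perm.ofFn_symm_eq_insertIdx (π : Equiv.Perm (Fin n)) (v : Fin n) :
    List.ofFn π.symm = ((List.ofFn π.symm).erase v).insertIdx (π v) v := by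
  have hv : (List.ofFn π.symm)[(π v : ℕ)]'(by simp) = v := by simp
  calc List.ofFn π.symm
      = ((List.ofFn π.symm).eraseIdx (π v)).insertIdx (π v) (List.ofFn π.symm)[(π v : ℕ)] :=
        (List.insertIdx_eraseIdx_getElem _).symm
    _ = _ := by rw [hv, π.erase_ofFn_symm_eq_eraseIdx]

theorem Equiv.Perm.exists_ofFn_symm_eq {L : List (Fin n)} (hL : L.Nodup) (hlen : L.length = n) :
    ∃ π : Equiv.Perm (Fin n), List.ofFn π.symm = L := by
  let σ : Fin n → Fin n := fun i => L[(i : ℕ)]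
  have hσ : Function.Injective σ := fun i j h => Fin.ext (hL.getElem_inj_iff.mp h)
  refine ⟨(Equiv.ofBijective σ (Finite.injective_iff_bijective.mp hσ)).symm, ?_⟩
  exact List.ext_getElem (by simp [hlen]) fun i _ _ => by simp [σ]

theorem Equiv.Perm.length_erase_ofFn_symm (π : Equiv.Perm (Fin n)) (v : Fin n) :
    ((List.ofFn π.symm).erase v).length = n - 1 := by
  rw [List.length_erase_of_mem (List.mem_ofFn.mpr ⟨π v, by simp⟩), List.length_ofFn]

theorem Equiv.Perm.exists_apply_eq_and_erase_ofFn_symm_eq (π₀ : Equiv.Perm (Fin n))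
    (v j : Fin n) :
    ∃ π : Equiv.Perm (Fin n), π v = j ∧
      (List.ofFn π.symm).erase v = (List.ofFn π₀.symm).erase v := by
  set g := (List.ofFn π₀.symm).erase v
  have hg : (v :: g).Nodup :=
    (List.perm_cons_erase (List.mem_ofFn.mpr ⟨π₀ v, by simp⟩)).nodup_iff.mp
      (List.nodup_ofFn.mpr π₀.symm.injective)
  have hglen : g.length = n - 1 := π₀.length_erase_ofFn_symm v
  have hj : (j : ℕ) ≤ g.length := by omega
  obtain ⟨π, hπ⟩ := Equiv.Perm.exists_ofFn_symm_eq
    ((List.perm_insertIdx v g hj).nodup_iff.mpr hg)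
    (by rw [List.length_insertIdx_of_le_length hj]; omega)
  have hπv : π v = j := by
    rw [← Equiv.eq_symm_apply]
    simpa [List.getElem?_insertIdx_self, hj] using congrArg (·[(j : ℕ)]?) hπ.symm
  refine ⟨π, hπv, ?_⟩
  rw [π.erase_ofFn_symm_eq_eraseIdx, hπ, hπv, List.eraseIdx_insertIdx_self]

theorem Equiv.Perm.card_filter_erase_ofFn_symm_eq (π₀ : Equiv.Perm (Fin n)) (v : Fin n) :
    (Finset.univ.filter fun π : Equiv.Perm (Fin n) =>
      (List.ofFn π.symm).erase v = (List.ofFn π₀.symm).erase v).card = n := by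
  refine (Finset.card_bij (t := Finset.univ) (fun π _ => π v) (fun _ _ => Finset.mem_univ _)
    ?_ ?_).trans (Finset.card_fin n)
  · intro π hπ π' hπ' h
    simp only [Finset.mem_filter, Finset.mem_univ, true_and] at hπ hπ'
    have h' : List.ofFn π.symm = List.ofFn π'.symm := by
      rw [π.ofFn_symm_eq_insertIdx v, π'.ofFn_symm_eq_insertIdx v, hπ, hπ', h]
    exact Equiv.symm_bijective.injective (DFunLike.coe_injective (List.ofFn_injective h'))
  · intro j _
    obtain ⟨π, hπv, hπ⟩ := π₀.exists_apply_eq_and_erase_ofFn_symm_eq v j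
    exact ⟨π, by simpa using hπ, hπv⟩

end PermutationFiber

theorem applyGrab_eq_applyGrab_iff (s₀ s₀' : Conf0 n x) (w v : Fin n) :
    applyGrab n x s₀ w = applyGrab n x s₀' v ↔
      s₀.2 = s₀'.2 ∧ w = v ∧ (List.ofFn s₀.1.symm).erase w = (List.ofFn s₀'.1.symm).erase v := by
  have hfilter (π : Equiv.Perm (Fin n)) (u : Fin n) :
      ((List.ofFn fun pos => π.symm pos).filter fun w => w ≠ u) = (List.ofFn π.symm).erase u := by
    rw [(List.nodup_ofFn.mpr π.symm.injective).erase_eq_filter]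
    exact List.filter_congr fun w _ => decide_not
  simp only [applyGrab, hfilter]
  -- `Conf1` is a plain `def`, so its product structure has to be exposed by hand
  change ((_, _, _) : (Fin (NArms n x) ≃ ArmIdx n x) × Fin n × (Fin (n - 1) → Fin n)) =
    (_, _, _) ↔ _
  rw [Prod.mk.injEq, Prod.mk.injEq, ← List.ofFn_inj,
    List.ofFn_getD_of_length_eq (s₀.1.length_erase_ofFn_symm w),
    List.ofFn_getD_of_length_eq (s₀'.1.length_erase_ofFn_symm v)]

theorem card_filter_exists_applyGrab_eq_applyGrab (h0 : 0 < NArms n x) {s₀' : Conf0 n x}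
    {v : Fin n} (hv : v ≠ firstOwner n x h0 s₀') :
    (Finset.univ.filter fun s₀ : Conf0 n x =>
      ∃ w, w ≠ firstOwner n x h0 s₀ ∧ applyGrab n x s₀ w = applyGrab n x s₀' v).card = n := by
  have hfiber : (Finset.univ.filter fun s₀ : Conf0 n x =>
      ∃ w, w ≠ firstOwner n x h0 s₀ ∧ applyGrab n x s₀ w = applyGrab n x s₀' v) =
      (Finset.univ.filter fun π : Equiv.Perm (Fin n) =>
        (List.ofFn π.symm).erase v = (List.ofFn s₀'.1.symm).erase v).map
        (⟨fun π => (π, s₀'.2), fun _ _ h => congrArg Prod.fst h⟩ :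
          Equiv.Perm (Fin n) ↪ Conf0 n x) := by
    ext s₀
    simp only [applyGrab_eq_applyGrab_iff, Finset.mem_filter, Finset.mem_univ, true_and,
      Finset.mem_map]
    constructor
    · rintro ⟨w, -, he, rfl, hπ⟩
      exact ⟨s₀.1, hπ, Prod.ext rfl he.symm⟩
    · rintro ⟨π, hπ, rfl⟩
      exact ⟨v, hv, rfl, rfl, hπ⟩
  rw [hfiber, Finset.card_map, s₀'.1.card_filter_erase_ofFn_symm_eq]

theorem card_filter_exists_applyGrab_eq (h0 : 0 < NArms n x) (s₁ : Conf1 n x) :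
    (Finset.univ.filter fun s₀ : Conf0 n x =>
      ∃ v, v ≠ firstOwner n x h0 s₀ ∧ applyGrab n x s₀ v = s₁).card =
      if s₁ ∈ Conf1Reachable n x h0 then n else 0 := by
  split_ifs with hs
  · obtain ⟨s₀', v, hv, rfl⟩ := (Finset.mem_filter.mp hs).2
    exact card_filter_exists_applyGrab_eq_applyGrab n x h0 hv
  · refine Finset.card_eq_zero.mpr (Finset.filter_eq_empty_iff.mpr fun s₀ _ ⟨v, hv, h⟩ => hs ?_)
    exact Finset.mem_filter.mpr ⟨Finset.mem_univ _, s₀, v, hv, h⟩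

theorem stepLaw_apply (hn : 2 ≤ n) (h0 : 0 < NArms n x) (s₀ : Conf0 n x) (s₁ : Conf1 n x) :
    stepLaw n x hn h0 s₀ s₁ =
      if ∃ v, v ≠ firstOwner n x h0 s₀ ∧ applyGrab n x s₀ v = s₁ then ((n - 1 : ℕ) : ℝ≥0∞)⁻¹
      else 0 := by
  have hgrab (v : Fin n) (h : applyGrab n x s₀ v = s₁) : v = s₁.2.1 := congrArg (·.2.1) h
  rw [stepLaw, PMF.map_apply, tsum_eq_single s₁.2.1 fun v hv => if_neg fun h => hv (hgrab v h.symm),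
    PMF.uniformOfFinset_apply, Finset.filter_ne', Finset.card_erase_of_mem (Finset.mem_univ _)]
  have hex : (∃ v, v ≠ firstOwner n x h0 s₀ ∧ applyGrab n x s₀ v = s₁) ↔
      s₁.2.1 ≠ firstOwner n x h0 s₀ ∧ applyGrab n x s₀ s₁.2.1 = s₁ :=
    ⟨fun ⟨v, hv, h⟩ => hgrab v h ▸ ⟨hv, h⟩, fun h => ⟨_, h⟩⟩
  by_cases hs₁ : applyGrab n x s₀ s₁.2.1 = s₁ <;> simp [hex, hs₁, eq_comm (a := s₁)]

theorem bind_stepLaw_apply (hn : 2 ≤ n) (h0 : 0 < NArms n x) (s₁ : Conf1 n x) :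
    (PMF.uniformOfFintype (Conf0 n x)).bind (stepLaw n x hn h0) s₁ =
      if s₁ ∈ Conf1Reachable n x h0 then
        n * ((Fintype.card (Conf0 n x) : ℝ≥0∞)⁻¹ * ((n - 1 : ℕ) : ℝ≥0∞)⁻¹)
      else 0 := by
  simp only [PMF.bind_apply, tsum_fintype, PMF.uniformOfFintype_apply, stepLaw_apply, mul_ite,
    mul_zero]
  rw [Finset.sum_ite, Finset.sum_const_zero, add_zero, Finset.sum_const, nsmul_eq_mul,
    card_filter_exists_applyGrab_eq]
  split_ifs <;> simp

theorem one_step_uniformity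
    (hn : 2 ≤ n) (h0 : 0 < NArms n x) :
    (∀ s₁ ∈ Conf1Reachable n x h0,
      (Finset.univ.filter fun s₀ : Conf0 n x =>
        ∃ v : Fin n, v ≠ firstOwner n x h0 s₀ ∧ applyGrab n x s₀ v = s₁).card = n) ∧
    (PMF.uniformOfFintype (Conf0 n x)).bind (stepLaw n x hn h0)
      = PMF.uniformOfFinset (Conf1Reachable n x h0) (conf1Reachable_nonempty n x hn h0) :=
  ⟨fun s₁ hs₁ => by rw [card_filter_exists_applyGrab_eq, if_pos hs₁],
    PMF.eq_uniformOfFinset_of_apply_eq_ite _ _ (bind_stepLaw_apply n x hn h0)⟩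

end OneStep
end
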